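/- For real s > 1, the Laplace transform of the modified Bessel function I_0 satisfies ∫_0^∞ e^{-sx} I_0(x) dx = 1/√(s²-1). -/

import Mathlib

set_option maxHeartbeats 1000000

open MeasureTheory Set Real

-- helper: integrability
lemma integrableOn_aux {a r : ℝ} (ha : -1 < a) (hr : 0 < r) :
    IntegrableOn (fun x : ℝ => x ^ a * Real.exp (-(r * x))) (Ioi (0:ℝ)) := by
  have := integrableOn_rpow_mul_exp_neg_mul_rpow (s := a) (p := 1) ha one_pos hr
  refine this.congr_fun (fun x hx => ?_) measurableSet_Ioi
  dsimp only
  rw [Real.rpow_one, neg_mul]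

lemma gammaHalf (k : ℕ) :
    Real.Gamma ((k : ℝ) + 1/2) =
      ((2*k).factorial : ℝ) * Real.sqrt π / (4 ^ k * (k.factorial : ℝ)) := by
  induction k with
  | zero => norm_num [Real.Gamma_one_half_eq]
  | succ k ih =>
    have h1 : ((k : ℝ) + 1) + 1/2 = ((k:ℝ) + 1/2) + 1 := by ring
    have h2 : (k:ℝ) + 1/2 ≠ 0 := by positivity
    have hfac : ((2*(k+1)).factorial : ℝ) = (2*k+2) * (2*k+1) * ((2*k).factorial : ℝ) := by
      have : 2*(k+1) = (2*k+1)+1 := by ring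
      rw [this, Nat.factorial_succ, Nat.factorial_succ]
      push_cast; ring
    push_cast
    rw [h1, Real.Gamma_add_one h2, ih, hfac, Nat.factorial_succ]
    have hk : (k.factorial : ℝ) ≠ 0 := Nat.cast_ne_zero.mpr k.factorial_ne_zero
    have h4 : (4:ℝ)^k ≠ 0 := by positivity
    push_cast
    field_simp
    ring

lemma fact_bound (k : ℕ) : ((2*k).factorial : ℝ) ≤ 4 ^ k * ((k.factorial : ℝ) * (k.factorial : ℝ)) := by
  induction k with
  | zero => norm_num
  | succ k ih =>
    have hfac : ((2*(k+1)).factorial : ℝ) = (2*k+2) * (2*k+1) * ((2*k).factorial : ℝ) := by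
      have : 2*(k+1) = (2*k+1)+1 := by ring
      rw [this, Nat.factorial_succ, Nat.factorial_succ]; push_cast; ring
    rw [hfac, Nat.factorial_succ]
    push_cast
    have h1 : (2*(k:ℝ)+2) * (2*k+1) * ((2*k).factorial : ℝ) ≤ (2*k+2) * (2*k+2) * (4^k * (k.factorial:ℝ)^2) := by
      have hf : (0:ℝ) ≤ ((2*k).factorial : ℝ) := by positivity
      nlinarith [hf, ih, Nat.cast_nonneg (α := ℝ) k]
    calc (2*(k:ℝ)+2) * (2*k+1) * ((2*k).factorial : ℝ)
        ≤ (2*k+2) * (2*k+2) * (4^k * (k.factorial:ℝ)^2) := h1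
      _ = 4^(k+1) * ((((k:ℝ)+1) * k.factorial) * (((k:ℝ)+1) * k.factorial)) := by ring

-- the key tsum
lemma tsum_gamma_half {t : ℝ} (ht0 : 0 ≤ t) (ht1 : t < 1) :
    ∑' k : ℕ, Real.Gamma ((k:ℝ) + 1/2) * t ^ k / (k.factorial : ℝ) =
      Real.sqrt π / Real.sqrt (1 - t) := by
  set F : ℕ → ℝ → ℝ := fun k u => (t ^ k / (k.factorial : ℝ)) * (u ^ (((k:ℝ) + 1/2) - 1) * Real.exp (-(1 * u))) with hF
  have hr : (0:ℝ) < 1 - t := by linarith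
  have hint : ∀ k, Integrable (F k) (volume.restrict (Ioi 0)) := by
    intro k
    have ha : (-1:ℝ) < ((k:ℝ) + 1/2) - 1 := by
      have : (0:ℝ) ≤ (k:ℝ) := Nat.cast_nonneg k
      linarith
    exact (integrableOn_aux ha one_pos).const_mul _
  have hval : ∀ k, ∫ u in Ioi (0:ℝ), F k u = t ^ k / (k.factorial : ℝ) * Real.Gamma ((k:ℝ) + 1/2) := by
    intro k
    rw [hF]
    rw [MeasureTheory.integral_const_mul]
    rw [Real.integral_rpow_mul_exp_neg_mul_Ioi (by positivity) one_pos]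
    norm_num
  have hnorm : ∀ k, ∫ u in Ioi (0:ℝ), ‖F k u‖ = t ^ k / (k.factorial : ℝ) * Real.Gamma ((k:ℝ) + 1/2) := by
    intro k
    rw [← hval k]
    refine setIntegral_congr_fun measurableSet_Ioi (fun u hu => ?_)
    rw [Real.norm_of_nonneg]
    have : (0:ℝ) < u := hu
    positivity
  have hsum : Summable fun k => ∫ u in Ioi (0:ℝ), ‖F k u‖ := by
    simp_rw [hnorm]
    refine Summable.of_nonneg_of_le (f := fun k => Real.sqrt π * t ^ k)
      (fun k => mul_nonneg (div_nonneg (pow_nonneg ht0 _) (Nat.cast_nonneg _))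
        (Real.Gamma_nonneg_of_nonneg (by positivity))) (fun k => ?_)
      ((summable_geometric_of_lt_one ht0 ht1).mul_left _)
    rw [gammaHalf]
    have hk : (0:ℝ) < (k.factorial : ℝ) := by exact_mod_cast k.factorial_pos
    have h4 : (0:ℝ) < 4^k := by positivity
    have hle : ((2*k).factorial:ℝ) / (4^k * (k.factorial:ℝ) * (k.factorial:ℝ)) ≤ 1 := by
      rw [div_le_one (by positivity)]
      have := fact_bound k
      linarith [fact_bound k, mul_assoc ((4:ℝ)^k) (k.factorial:ℝ) (k.factorial:ℝ)]
    have e1 : t ^ k / (k.factorial:ℝ) * (((2*k).factorial:ℝ) * Real.sqrt π / (4^k * (k.factorial:ℝ)))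
        = Real.sqrt π * t ^ k * (((2*k).factorial:ℝ) / (4^k * (k.factorial:ℝ) * (k.factorial:ℝ))) := by
      field_simp
    rw [e1]
    calc Real.sqrt π * t ^ k * (((2*k).factorial:ℝ) / (4^k * (k.factorial:ℝ) * (k.factorial:ℝ)))
        ≤ Real.sqrt π * t ^ k * 1 := by
          apply mul_le_mul_of_nonneg_left hle (by positivity)
      _ = Real.sqrt π * t ^ k := mul_one _
  have hswap := MeasureTheory.integral_tsum_of_summable_integral_norm hint hsum
  have hpt : ∀ u ∈ Ioi (0:ℝ), (∑' k, F k u) = u ^ ((1/2:ℝ) - 1) * Real.exp (-((1-t) * u)) := by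
    intro u hu
    have hu' : (0:ℝ) < u := hu
    have h1 : ∀ k : ℕ, F k u = (u ^ ((1/2:ℝ)-1) * Real.exp (-u)) * ((t*u)^k / (k.factorial:ℝ)) := by
      intro k
      rw [hF]
      have : u ^ (((k:ℝ) + 1/2) - 1) = u ^ (k:ℕ) * u ^ ((1/2:ℝ)-1) := by
        rw [← Real.rpow_natCast u k, ← Real.rpow_add hu']
        ring_nf
      simp only [this, mul_pow, one_mul]
      ring
    simp_rw [h1]
    rw [tsum_mul_left]
    have hexp : (∑' k : ℕ, (t*u)^k / (k.factorial:ℝ)) = Real.exp (t*u) := by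
      rw [Real.exp_eq_exp_ℝ, NormedSpace.exp_eq_tsum_div]
    rw [hexp, mul_assoc, ← Real.exp_add]
    congr 2
    ring
  have hI : ∫ u in Ioi (0:ℝ), (∑' k, F k u) = (1/(1-t)) ^ ((1/2:ℝ)) * Real.Gamma (1/2) := by
    rw [setIntegral_congr_fun measurableSet_Ioi hpt]
    exact Real.integral_rpow_mul_exp_neg_mul_Ioi one_half_pos hr
  calc ∑' k : ℕ, Real.Gamma ((k:ℝ) + 1/2) * t ^ k / (k.factorial : ℝ)
      = ∑' k : ℕ, ∫ u in Ioi (0:ℝ), F k u := by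
        refine tsum_congr fun k => ?_
        rw [hval]; ring
    _ = ∫ u in Ioi (0:ℝ), (∑' k, F k u) := hswap
    _ = (1/(1-t)) ^ ((1/2:ℝ)) * Real.Gamma (1/2) := hI
    _ = Real.sqrt π / Real.sqrt (1 - t) := by
        rw [Real.Gamma_one_half_eq, ← Real.sqrt_eq_rpow, one_div, Real.sqrt_inv]
        rw [inv_mul_eq_div]

/-- Modified Bessel function of the first kind of order zero. -/
noncomputable def besselI0 (x : ℝ) : ℝ :=
  ∑' k : ℕ, (x / 2) ^ (2 * k) / ((k.factorial : ℝ) ^ 2)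

theorem stmt_6 (s : ℝ) (hs : 1 < s) :
    ∫ x in Set.Ioi (0 : ℝ), Real.exp (-s * x) * besselI0 x =
      1 / Real.sqrt (s ^ 2 - 1) := by
  have hs0 : (0:ℝ) < s := lt_trans one_pos hs
  have hs2 : (1:ℝ) < s ^ 2 := by nlinarith
  set t : ℝ := 1 / s ^ 2 with ht
  have ht0 : 0 ≤ t := by positivity
  have ht1 : t < 1 := by
    rw [ht, div_lt_one (by positivity)]; exact hs2
  set G : ℕ → ℝ → ℝ := fun k x =>
    (1 / ((4:ℝ) ^ k * (k.factorial:ℝ) ^ 2)) *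
      (x ^ ((((2*k:ℕ)):ℝ) + 1 - 1) * Real.exp (-(s * x))) with hG
  have hint : ∀ k, Integrable (G k) (volume.restrict (Ioi 0)) := by
    intro k
    have ha : (-1:ℝ) < (((2*k:ℕ)):ℝ) + 1 - 1 := by
      have : (0:ℝ) ≤ (((2*k:ℕ)):ℝ) := Nat.cast_nonneg _
      linarith
    exact (integrableOn_aux ha hs0).const_mul _
  have hval : ∀ k, ∫ x in Ioi (0:ℝ), G k x
      = ((2*k).factorial : ℝ) * (1/s) ^ (2*k+1) / ((4:ℝ)^k * (k.factorial:ℝ)^2) := by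
    intro k
    rw [hG]
    rw [MeasureTheory.integral_const_mul]
    rw [Real.integral_rpow_mul_exp_neg_mul_Ioi (by positivity) hs0]
    rw [Real.Gamma_nat_eq_factorial (2*k)]
    rw [show (((2*k:ℕ)):ℝ) + 1 = (((2*k+1:ℕ)):ℝ) by push_cast; ring, Real.rpow_natCast]
    ring
  have hnorm : ∀ k, ∫ x in Ioi (0:ℝ), ‖G k x‖ = ∫ x in Ioi (0:ℝ), G k x := by
    intro k
    refine setIntegral_congr_fun measurableSet_Ioi (fun x hx => ?_)
    have hx' : (0:ℝ) < x := hx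
    rw [Real.norm_of_nonneg]
    rw [hG]
    positivity
  have hsum : Summable fun k => ∫ x in Ioi (0:ℝ), ‖G k x‖ := by
    simp_rw [hnorm, hval]
    refine Summable.of_nonneg_of_le (f := fun k => (1/s) * t ^ k)
      (fun k => by positivity) (fun k => ?_)
      ((summable_geometric_of_lt_one ht0 ht1).mul_left _)
    have hk : (0:ℝ) < (k.factorial : ℝ) := by exact_mod_cast k.factorial_pos
    have h4 : (0:ℝ) < (4:ℝ)^k := by positivity
    have hle : ((2*k).factorial:ℝ) / ((4:ℝ)^k * (k.factorial:ℝ)^2) ≤ 1 := by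
      rw [div_le_one (by positivity)]
      have := fact_bound k
      nlinarith [fact_bound k]
    have hpow : ((1:ℝ)/s) ^ (2*k+1) = (1/s) * t ^ k := by
      rw [ht]
      field_simp
      rw [show (1/s^2) = (1/s)^2 by ring, ← pow_mul, pow_succ, mul_comm, mul_assoc, one_div, inv_mul_cancel₀ hs0.ne', mul_one]
    calc ((2*k).factorial : ℝ) * (1/s) ^ (2*k+1) / ((4:ℝ)^k * (k.factorial:ℝ)^2)
        = ((1:ℝ)/s) ^ (2*k+1) * (((2*k).factorial:ℝ) / ((4:ℝ)^k * (k.factorial:ℝ)^2)) := by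
          ring
      _ ≤ ((1:ℝ)/s) ^ (2*k+1) * 1 := by
          apply mul_le_mul_of_nonneg_left hle (by positivity)
      _ = (1/s) * t ^ k := by rw [mul_one, hpow]
  have hpt : ∀ x ∈ Ioi (0:ℝ), Real.exp (-s * x) * besselI0 x = ∑' k, G k x := by
    intro x hx
    have hx' : (0:ℝ) < x := hx
    rw [besselI0, ← tsum_mul_left]
    refine tsum_congr fun k => ?_
    simp only [hG]
    have h1 : x ^ ((((2*k:ℕ)):ℝ) + 1 - 1) = x ^ (2*k) := by
      rw [add_sub_cancel_right, Real.rpow_natCast]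
    rw [h1]
    have h2 : (x / 2) ^ (2*k) = x ^ (2*k) / 4 ^ k := by
      rw [div_pow]
      congr 1
      rw [pow_mul]
      norm_num
    rw [h2, neg_mul]
    ring
  have hswap := MeasureTheory.integral_tsum_of_summable_integral_norm hint hsum
  rw [setIntegral_congr_fun measurableSet_Ioi hpt, ← hswap]
  have hterm : ∀ k : ℕ, ∫ x in Ioi (0:ℝ), G k x
      = (1/(s * Real.sqrt π)) * (Real.Gamma ((k:ℝ) + 1/2) * t ^ k / (k.factorial : ℝ)) := by
    intro k
    rw [hval, gammaHalf, ht]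
    have hk : (0:ℝ) < (k.factorial : ℝ) := by exact_mod_cast k.factorial_pos
    have h4 : (0:ℝ) < (4:ℝ)^k := by positivity
    have hsp : (0:ℝ) < Real.sqrt π := Real.sqrt_pos.mpr Real.pi_pos
    field_simp
    rw [show (1/s^2) = (1/s)^2 by ring, ← pow_mul, pow_succ, mul_comm, mul_assoc, one_div, inv_mul_cancel₀ hs0.ne', mul_one]
  simp_rw [hterm]
  rw [tsum_mul_left, tsum_gamma_half ht0 ht1]
  have h1t : 1 - t = (s^2 - 1) / s^2 := by
    rw [ht]; field_simp
  have hsq : Real.sqrt (s^2) = s := by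
    rw [Real.sqrt_sq hs0.le]
  rw [h1t, Real.sqrt_div (by nlinarith : (0:ℝ) ≤ s^2 - 1), hsq]
  have hsp : (0:ℝ) < Real.sqrt π := Real.sqrt_pos.mpr Real.pi_pos
  have hsm : (0:ℝ) < Real.sqrt (s^2 - 1) := Real.sqrt_pos.mpr (by nlinarith)
  field_simp
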